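/- arXiv:1903.04706 — 7 statements merged into one kernel-verified Lean document; each statement's English description precedes it below -/
import Mathlib

section
/- Let t0 < t1 be real numbers and let b : ℝ → ℝ be continuously differentiable on [t0, t1]. Let α : ℝ → ℝ be an extended class K function. If b'(t) + α(b(t)) ≥ 0 for all t ∈ [t0, t1] and b(t0) ≥ 0, then b(t) ≥ 0 for all t ∈ [t0, t1]. -/
/-- An extended class K function: strictly increasing on ℝ with α(0) = 0. -/
def ExtClassK (α : ℝ → ℝ) : Prop := StrictMono α ∧ α 0 = 0

/-- If `b` is continuously differentiable on `[t0, t1]`, `α` is an extended class K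
function, `b'(t) + α(b(t)) ≥ 0` on `[t0, t1]` and `b(t0) ≥ 0`, then `b(t) ≥ 0`
for all `t ∈ [t0, t1]`. -/
theorem barrier_lemma_scalar
    (t0 t1 : ℝ) (ht : t0 < t1)
    (b : ℝ → ℝ) (hb : ContDiffOn ℝ 1 b (Set.Icc t0 t1))
    (α : ℝ → ℝ) (hα : ExtClassK α)
    (hineq : ∀ t ∈ Set.Icc t0 t1,
      derivWithin b (Set.Icc t0 t1) t + α (b t) ≥ 0)
    (h0 : b t0 ≥ 0) :
    ∀ t ∈ Set.Icc t0 t1, b t ≥ 0 := by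
  intro t htmem
  by_contra hneg
  push_neg at hneg
  obtain ⟨ht0t, htt1⟩ := htmem
  have hcont : ContinuousOn b (Set.Icc t0 t1) := hb.continuousOn
  set S : Set ℝ := Set.Icc t0 t ∩ b ⁻¹' Set.Ici 0 with hS
  have hScl : IsClosed S :=
    (hcont.mono (Set.Icc_subset_Icc le_rfl htt1)).preimage_isClosed_of_isClosed
      isClosed_Icc isClosed_Ici
  have ht0S : t0 ∈ S := ⟨⟨le_rfl, ht0t⟩, h0⟩
  have hSne : S.Nonempty := ⟨t0, ht0S⟩
  have hbdd : BddAbove S := ⟨t, fun u hu => hu.1.2⟩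
  set T := sSup S with hT
  have hTS : T ∈ S := hScl.csSup_mem hSne hbdd
  have hTle : T ≤ t := csSup_le hSne fun u hu => hu.1.2
  have ht0T : t0 ≤ T := le_csSup hbdd ht0S
  have hbT : 0 ≤ b T := hTS.2
  have hTlt : T < t := lt_of_le_of_ne hTle (fun h => by
    rw [h] at hbT; exact absurd hbT (not_le.mpr hneg))
  -- b < 0 on (T, t]
  have hblt : ∀ u ∈ Set.Ioc T t, b u < 0 := by
    intro u hu
    by_contra hc
    push_neg at hc
    have : u ∈ S := ⟨⟨ht0T.trans hu.1.le, hu.2⟩, hc⟩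
    exact absurd (le_csSup hbdd this) (not_le.mpr hu.1)
  -- strict mono on [T, t]
  have hmono : StrictMonoOn b (Set.Icc T t) := by
    apply strictMonoOn_of_deriv_pos (convex_Icc T t)
      (hcont.mono (Set.Icc_subset_Icc ht0T (htt1)))
    intro x hx
    rw [interior_Icc] at hx
    have hx1 : x ∈ Set.Icc t0 t1 := ⟨ht0T.trans hx.1.le, (hx.2.le.trans htt1)⟩
    have hxnhds : Set.Icc t0 t1 ∈ nhds x :=
      Icc_mem_nhds (ht0T.trans_lt hx.1) (hx.2.trans_le htt1)
    have hdw : derivWithin b (Set.Icc t0 t1) x = deriv b x :=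
      derivWithin_of_mem_nhds hxnhds
    have hbx : b x < 0 := hblt x ⟨hx.1, hx.2.le⟩
    have hαx : α (b x) < 0 := by
      have := hα.1 hbx
      rwa [hα.2] at this
    have := hineq x hx1
    rw [hdw] at this
    linarith
  have := hmono ⟨le_rfl, hTle⟩ ⟨hTle, le_rfl⟩ hTlt
  linarith
end

section
/- (Theorem 1, barrier functions imply forward invariance.) Let f : ℝⁿ → ℝⁿ be locally Lipschitz, let b : ℝⁿ → ℝ be continuously differentiable, and let α : ℝ → ℝ be an extended class K function. Assume the Lyapunov-like condition Db(x)(f(x)) + α(b(x)) ≥ 0 holds for all x ∈ ℝⁿ, where Db(x) denotes the Fréchet derivative of b at x. Then for every t0 ∈ ℝ and every differentiable curve x : ℝ → ℝⁿ satisfying x'(t) = f(x(t)) for all t ≥ t0 and b(x(t0)) ≥ 0, one has b(x(t)) ≥ 0 for all t ≥ t0; that is, the set C = {x ∈ ℝⁿ : b(x) ≥ 0} is forward invariant for the system ẋ = f(x). -/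
/-- Theorem 1: if `b` is a barrier function for `ẋ = f(x)`, i.e. the Lyapunov-like
condition `Db(x)(f(x)) + α(b(x)) ≥ 0` holds for all `x`, then the set
`C = {x : b(x) ≥ 0}` is forward invariant. -/
theorem barrier_function_forward_invariance
    (n : ℕ)
    (f : EuclideanSpace ℝ (Fin n) → EuclideanSpace ℝ (Fin n))
    (hf : LocallyLipschitz f)
    (b : EuclideanSpace ℝ (Fin n) → ℝ) (hb : ContDiff ℝ 1 b)
    (α : ℝ → ℝ) (hα : ExtClassK α)
    (hineq : ∀ x, fderiv ℝ b x (f x) + α (b x) ≥ 0) :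
    ∀ (t0 : ℝ) (x : ℝ → EuclideanSpace ℝ (Fin n)),
      (∀ t, t0 ≤ t → HasDerivAt x (f (x t)) t) →
      b (x t0) ≥ 0 →
      ∀ t, t0 ≤ t → b (x t) ≥ 0 := by
  intro t0 x hx h0 t1 ht1
  by_contra hneg
  push_neg at hneg
  set g : ℝ → ℝ := fun t => b (x t) with hg
  have hbd : Differentiable ℝ b := hb.differentiable one_ne_zero
  have hg' : ∀ t, t0 ≤ t → HasDerivAt g (fderiv ℝ b (x t) (f (x t))) t := by
    intro t ht
    exact (hbd (x t)).hasFDerivAt.comp_hasDerivAt t (hx t ht)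
  have hgc : ContinuousOn g (Set.Icc t0 t1) := fun t ht =>
    ((hg' t ht.1).continuousAt).continuousWithinAt
  -- the set where g is nonnegative
  set S : Set ℝ := Set.Icc t0 t1 ∩ {t | 0 ≤ g t} with hS
  have hSne : S.Nonempty := ⟨t0, ⟨le_rfl, ht1⟩, h0⟩
  have hSbdd : BddAbove S := ⟨t1, fun t ht => ht.1.2⟩
  have hSclosed : IsClosed S := by
    have : S = Set.Icc t0 t1 ∩ (g ⁻¹' Set.Ici 0) := rfl
    rw [this]
    exact hgc.preimage_isClosed_of_isClosed isClosed_Icc isClosed_Ici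
  obtain ⟨⟨hs0, hs1⟩, hgs⟩ := hSclosed.csSup_mem hSne hSbdd
  set s := sSup S
  have hst1 : s < t1 := by
    rcases lt_or_eq_of_le hs1 with h | h
    · exact h
    · exfalso; rw [h] at hgs; exact absurd hgs (not_le.mpr hneg)
  have hmono : StrictMonoOn g (Set.Icc s t1) := by
    apply strictMonoOn_of_deriv_pos (convex_Icc s t1)
    · exact hgc.mono (Set.Icc_subset_Icc hs0 le_rfl)
    · intro t ht
      rw [interior_Icc] at ht
      have ht0 : t0 ≤ t := le_trans hs0 ht.1.le
      have hgt : g t < 0 := by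
        by_contra hge
        push_neg at hge
        have : t ∈ S := ⟨⟨ht0, ht.2.le⟩, hge⟩
        exact absurd (le_csSup hSbdd this) (not_le.mpr ht.1)
      have hαneg : α (g t) < 0 := by
        have := hα.1 hgt
        rwa [hα.2] at this
      rw [(hg' t ht0).deriv]
      have := hineq (x t)
      linarith
  have := hmono (Set.left_mem_Icc.mpr hst1.le) (Set.right_mem_Icc.mpr hst1.le) hst1
  simp only [g, Set.mem_setOf_eq] at this hgs
  linarith
end

section
/- (Theorem 2, control barrier functions render the safe set forward invariant.) Consider an affine control system ẋ = f(x) + g(x)u with f : ℝⁿ → ℝⁿ and g : ℝⁿ → (ℝ^q →L ℝⁿ) locally Lipschitz. Let b : ℝⁿ → ℝ be continuously differentiable and let α : ℝ → ℝ be an extended class K function. Let u : ℝⁿ → ℝ^q be a Lipschitz continuous state-feedback controller such that for every x ∈ ℝⁿ, Db(x)(f(x) + g(x)(u(x))) + α(b(x)) ≥ 0, where Db(x) is the Fréchet derivative of b at x. Then for every t0 ∈ ℝ and every differentiable curve x : ℝ → ℝⁿ satisfying x'(t) = f(x(t)) + g(x(t))(u(x(t))) for all t ≥ t0 and b(x(t0))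 ≥ 0, one has b(x(t)) ≥ 0 for all t ≥ t0; that is, the set C = {x ∈ ℝⁿ : b(x) ≥ 0} is forward invariant for the closed-loop system. -/
/-- Theorem 2: given a CBF `b` for the affine control system `ẋ = f(x) + g(x)u`,
any Lipschitz continuous feedback controller `u(x)` satisfying
`Db(x)(f(x) + g(x)u(x)) + α(b(x)) ≥ 0` for all `x` renders the set
`C = {x : b(x) ≥ 0}` forward invariant for the closed-loop system. -/
theorem cbf_forward_invariance
    (n q : ℕ)
    (f : EuclideanSpace ℝ (Fin n) → EuclideanSpace ℝ (Fin n))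
    (hf : LocallyLipschitz f)
    (g : EuclideanSpace ℝ (Fin n) →
      (EuclideanSpace ℝ (Fin q) →L[ℝ] EuclideanSpace ℝ (Fin n)))
    (hg : LocallyLipschitz g)
    (b : EuclideanSpace ℝ (Fin n) → ℝ) (hb : ContDiff ℝ 1 b)
    (α : ℝ → ℝ) (hα : ExtClassK α)
    (u : EuclideanSpace ℝ (Fin n) → EuclideanSpace ℝ (Fin q))
    (hu : ∃ K, LipschitzWith K u)
    (hineq : ∀ x, fderiv ℝ b x (f x + g x (u x)) + α (b x) ≥ 0) :
    ∀ (t0 : ℝ) (x : ℝ → EuclideanSpace ℝ (Fin n)),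
      (∀ t, t0 ≤ t → HasDerivAt x (f (x t) + g (x t) (u (x t))) t) →
      b (x t0) ≥ 0 →
      ∀ t, t0 ≤ t → b (x t) ≥ 0 := by
  intro t0 x hx hb0 t ht
  by_contra hneg
  push_neg at hneg
  set y : ℝ → ℝ := fun s => b (x s) with hy
  have hyderiv : ∀ s, t0 ≤ s →
      HasDerivAt y (fderiv ℝ b (x s) (f (x s) + g (x s) (u (x s)))) s := by
    intro s hs
    exact ((hb.differentiable one_ne_zero (x s)).hasFDerivAt).comp_hasDerivAt s (hx s hs)
  have hycont : ContinuousOn y (Set.Icc t0 t) := fun s hs =>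
    ((hyderiv s hs.1).continuousAt).continuousWithinAt
  set S : Set ℝ := Set.Icc t0 t ∩ y ⁻¹' Set.Ici 0 with hS
  have hScl : IsClosed S :=
    hycont.preimage_isClosed_of_isClosed isClosed_Icc isClosed_Ici
  have ht0S : t0 ∈ S := ⟨⟨le_refl _, ht⟩, hb0⟩
  have hSbdd : BddAbove S := ⟨t, fun r hr => hr.1.2⟩
  set s := sSup S with hsdef
  have hsS : s ∈ S := hScl.csSup_mem ⟨t0, ht0S⟩ hSbdd
  have hys : 0 ≤ y s := hsS.2
  have hst : s < t := by
    rcases lt_or_eq_of_le hsS.1.2 with h | h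
    · exact h
    · exact absurd (h ▸ hys) (not_le.mpr hneg)
  have hlt : ∀ r ∈ Set.Ioc s t, y r < 0 := by
    intro r hr
    by_contra hge
    push_neg at hge
    have hrS : r ∈ S := ⟨⟨le_trans hsS.1.1 hr.1.le, hr.2⟩, hge⟩
    exact absurd (le_csSup hSbdd hrS) (not_le.mpr hr.1)
  have hsub : Set.Icc s t ⊆ Set.Icc t0 t := Set.Icc_subset_Icc hsS.1.1 le_rfl
  have hmono : MonotoneOn y (Set.Icc s t) := by
    apply monotoneOn_of_deriv_nonneg (convex_Icc s t) (hycont.mono hsub)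
    · intro r hr
      rw [interior_Icc] at hr
      exact ((hyderiv r (le_trans hsS.1.1 hr.1.le)).differentiableAt).differentiableWithinAt
    · intro r hr
      rw [interior_Icc] at hr
      have ht0r : t0 ≤ r := le_trans hsS.1.1 hr.1.le
      have hd := (hyderiv r ht0r).deriv
      rw [hd]
      have hyr : y r < 0 := hlt r ⟨hr.1, hr.2.le⟩
      have hαneg : α (y r) < 0 := by
        have := hα.1 hyr
        rwa [hα.2] at this
      have := hineq (x r)
      linarith
  have := hmono ⟨le_refl s, hst.le⟩ ⟨hst.le, le_refl t⟩ hst.le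
  linarith
end

section
/- (Scalar recursion lemma underlying Theorem 4.) Let m ≥ 1, let t0 ∈ ℝ, and let α_1, …, α_m : ℝ → ℝ be extended class K functions. Let φ_0, φ_1, …, φ_m : ℝ → ℝ be functions such that φ_0, …, φ_{m-1} are differentiable on [t0, ∞) and for each i ∈ {0, …, m−1}, φ_{i+1}(t) = φ_i'(t) + α_{i+1}(φ_i(t)) for all t ≥ t0. If φ_m(t) ≥ 0 for all t ≥ t0 and φ_i(t0) ≥ 0 for every i ∈ {0, …, m−1}, then φ_i(t) ≥ 0 for every i ∈ {0, …, m−1} and every t ≥ t0. -/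
/-- Single-step comparison lemma: if `φ' + α(φ) ≥ 0` on `[t0,∞)` with `α`
extended class K and `φ t0 ≥ 0`, then `φ ≥ 0` on `[t0,∞)`. -/
lemma hobf_key (t0 : ℝ) (α φ : ℝ → ℝ) (hα : StrictMono α) (hα0 : α 0 = 0)
    (hdiff : DifferentiableOn ℝ φ (Set.Ici t0))
    (hge : ∀ t, t0 ≤ t → 0 ≤ derivWithin φ (Set.Ici t0) t + α (φ t))
    (h0 : 0 ≤ φ t0) : ∀ t, t0 ≤ t → 0 ≤ φ t := by
  intro t1 ht1
  by_contra hneg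
  push_neg at hneg
  have ht01 : t0 < t1 := by
    rcases lt_or_eq_of_le ht1 with h | h
    · exact h
    · exact absurd h0 (by rw [h]; exact not_le.2 hneg)
  set S : Set ℝ := Set.Icc t0 t1 ∩ φ ⁻¹' Set.Ici 0 with hS
  have hcont : ContinuousOn φ (Set.Icc t0 t1) :=
    hdiff.continuousOn.mono (Set.Icc_subset_Ici_self)
  have hSclosed : IsClosed S :=
    hcont.preimage_isClosed_of_isClosed isClosed_Icc isClosed_Ici
  have hScomp : IsCompact S :=
    isCompact_Icc.of_isClosed_subset hSclosed Set.inter_subset_left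
  have hSne : S.Nonempty := ⟨t0, ⟨le_refl _, le_of_lt ht01⟩, h0⟩
  obtain ⟨⟨hs0, hs1⟩, hsφ⟩ := hScomp.sSup_mem hSne
  set s := sSup S
  have hst1 : s < t1 := by
    rcases lt_or_eq_of_le hs1 with h | h
    · exact h
    · exact absurd (h ▸ hsφ) (not_le.2 hneg)
  have hIoo_neg : ∀ x ∈ Set.Ioo s t1, φ x < 0 := by
    intro x hx
    by_contra hc
    push_neg at hc
    have hxS : x ∈ S := ⟨⟨le_trans hs0 hx.1.le, hx.2.le⟩, hc⟩
    exact absurd (le_csSup hScomp.bddAbove hxS) (not_le.2 hx.1)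
  have hmono : StrictMonoOn φ (Set.Icc s t1) := by
    apply strictMonoOn_of_deriv_pos (convex_Icc s t1)
      (hcont.mono (Set.Icc_subset_Icc hs0 le_rfl))
    intro x hx
    rw [interior_Icc] at hx
    have hxt0 : t0 < x := lt_of_le_of_lt hs0 hx.1
    have hnhds : Set.Ici t0 ∈ nhds x := Ici_mem_nhds hxt0
    have hderiv : derivWithin φ (Set.Ici t0) x = deriv φ x :=
      derivWithin_of_mem_nhds hnhds
    have hαneg : α (φ x) < 0 := by
      have := hα (hIoo_neg x hx)
      rwa [hα0] at this
    have := hge x hxt0.le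
    rw [hderiv] at this
    linarith
  have hsφ' : 0 ≤ φ s := hsφ
  have := hmono ⟨le_rfl, hst1.le⟩ ⟨hst1.le, le_rfl⟩ hst1
  linarith

/-- Scalar recursion lemma underlying Theorem 4: if `φ_{i+1} = φ_i' + α_{i+1}(φ_i)`
on `[t0, ∞)` for `i = 0, …, m−1`, `φ_m ≥ 0` on `[t0, ∞)` and `φ_i(t0) ≥ 0` for
`i = 0, …, m−1`, then `φ_i(t) ≥ 0` for all `t ≥ t0` and `i = 0, …, m−1`. -/
theorem hobf_scalar_recursion
    (m : ℕ) (hm : 1 ≤ m) (t0 : ℝ)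
    (α : ℕ → ℝ → ℝ)
    (hα : ∀ i, 1 ≤ i → i ≤ m → ExtClassK (α i))
    (φ : ℕ → ℝ → ℝ)
    (hdiff : ∀ i < m, DifferentiableOn ℝ (φ i) (Set.Ici t0))
    (hrec : ∀ i < m, ∀ t, t0 ≤ t →
      φ (i + 1) t = derivWithin (φ i) (Set.Ici t0) t + α (i + 1) (φ i t))
    (htop : ∀ t, t0 ≤ t → φ m t ≥ 0)
    (hinit : ∀ i < m, φ i t0 ≥ 0) :
    ∀ i < m, ∀ t, t0 ≤ t → φ i t ≥ 0 := by
  have main : ∀ k, k ≤ m → ∀ t, t0 ≤ t → 0 ≤ φ (m - k) t := by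
    intro k
    induction k with
    | zero => intro _ t ht; simpa using htop t ht
    | succ n ih =>
      intro hn t ht
      set j := m - (n + 1) with hj
      have hjm : j < m := by omega
      have hj1 : j + 1 = m - n := by omega
      obtain ⟨hmono, h0⟩ := hα (j + 1) (by omega) (by omega)
      refine hobf_key t0 (α (j + 1)) (φ j) hmono h0 (hdiff j hjm) ?_ (hinit j hjm) t ht
      intro u hu
      have := ih (by omega) u hu
      rw [← hj1] at this
      rw [← hrec j hjm u hu]
      exact this
  intro i hi t ht
  have := main (m - i) (by omega) t ht
  rwa [Nat.sub_sub_self hi.le] at this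
end

section
/- (Exponential decay of a control Lyapunov function, first part of Theorem 3.) Consider an affine control system ẋ = f(x) + g(x)u with f : ℝⁿ → ℝⁿ and g : ℝⁿ → (ℝ^q →L ℝⁿ) locally Lipschitz. Let V : ℝⁿ → ℝ be continuously differentiable and let c3 > 0. Let u : ℝⁿ → ℝ^q be a Lipschitz continuous controller such that for every x ∈ ℝⁿ, DV(x)(f(x) + g(x)(u(x))) + c3·V(x) ≤ 0, where DV(x) is the Fréchet derivative of V at x. Then for every t0 ∈ ℝ and every differentiable curve x : ℝ → ℝⁿ satisfying x'(t) = f(x(t)) + g(x(t))(u(x(t))) for all t ≥ t0, one has V(x(t)) ≤ V(x(t0))·exp(−c3·(t − t0)) for all t ≥ t0. -/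
/-- First part of Theorem 3: along any closed-loop trajectory of
`ẋ = f(x) + g(x)u(x)` with a Lipschitz controller satisfying the CLF constraint
`DV(x)(f(x) + g(x)u(x)) + c3·V(x) ≤ 0` for all `x`, the control Lyapunov
function decays exponentially: `V(x(t)) ≤ V(x(t0))·exp(−c3·(t − t0))`. -/
theorem clf_exponential_decay
    (n q : ℕ)
    (f : EuclideanSpace ℝ (Fin n) → EuclideanSpace ℝ (Fin n))
    (hf : LocallyLipschitz f)
    (g : EuclideanSpace ℝ (Fin n) →
      (EuclideanSpace ℝ (Fin q) →L[ℝ] EuclideanSpace ℝ (Fin n)))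
    (hg : LocallyLipschitz g)
    (V : EuclideanSpace ℝ (Fin n) → ℝ) (hV : ContDiff ℝ 1 V)
    (c3 : ℝ) (hc3 : 0 < c3)
    (u : EuclideanSpace ℝ (Fin n) → EuclideanSpace ℝ (Fin q))
    (hu : ∃ K, LipschitzWith K u)
    (hineq : ∀ x, fderiv ℝ V x (f x + g x (u x)) + c3 * V x ≤ 0) :
    ∀ (t0 : ℝ) (x : ℝ → EuclideanSpace ℝ (Fin n)),
      (∀ t, t0 ≤ t → HasDerivAt x (f (x t) + g (x t) (u (x t))) t) →
      ∀ t, t0 ≤ t → V (x t) ≤ V (x t0) * Real.exp (-c3 * (t - t0)) := by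
  intro t0 x hx t ht
  set F : ℝ → ℝ := fun t => V (x t) * Real.exp (c3 * (t - t0)) with hF
  have hVd : Differentiable ℝ V := hV.differentiable one_ne_zero
  have hder : ∀ s ∈ Set.Ici t0, HasDerivAt F
      ((fderiv ℝ V (x s) (f (x s) + g (x s) (u (x s))) + c3 * V (x s))
        * Real.exp (c3 * (s - t0))) s := by
    intro s hs
    have h1 : HasDerivAt (fun t => V (x t))
        (fderiv ℝ V (x s) (f (x s) + g (x s) (u (x s)))) s :=
      (hVd (x s)).hasFDerivAt.comp_hasDerivAt s (hx s hs)
    have h2 : HasDerivAt (fun t => Real.exp (c3 * (t - t0)))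
        (c3 * Real.exp (c3 * (s - t0))) s := by
      have : HasDerivAt (fun t : ℝ => c3 * (t - t0)) c3 s := by
        simpa using ((hasDerivAt_id s).sub_const t0).const_mul c3
      simpa [mul_comm] using this.exp
    have := h1.mul h2
    refine this.congr_deriv ?_
    ring
  have hcont : ContinuousOn F (Set.Ici t0) := fun s hs =>
    ((hder s hs).continuousAt).continuousWithinAt
  have hanti : AntitoneOn F (Set.Ici t0) := by
    apply antitoneOn_of_deriv_nonpos (convex_Ici t0) hcont
    · intro s hs
      rw [interior_Ici] at hs
      exact ((hder s (Set.mem_Ici.mpr (le_of_lt (Set.mem_Ioi.mp hs)))).differentiableAt).differentiableWithinAt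
    · intro s hs
      rw [interior_Ici] at hs
      rw [(hder s (Set.mem_Ici.mpr (le_of_lt (Set.mem_Ioi.mp hs)))).deriv]
      have := hineq (x s)
      have he : 0 < Real.exp (c3 * (s - t0)) := Real.exp_pos _
      exact mul_nonpos_of_nonpos_of_nonneg this he.le
  have hle : F t ≤ F t0 := hanti (Set.self_mem_Ici) ht ht
  have hFt0 : F t0 = V (x t0) := by simp [hF]
  rw [hFt0] at hle
  have he : (0:ℝ) < Real.exp (c3 * (t - t0)) := Real.exp_pos _
  have : V (x t) ≤ V (x t0) / Real.exp (c3 * (t - t0)) := by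
    rw [le_div_iff₀ he]
    exact hle
  calc V (x t) ≤ V (x t0) / Real.exp (c3 * (t - t0)) := this
    _ = V (x t0) * Real.exp (-c3 * (t - t0)) := by
        rw [div_eq_mul_inv, ← Real.exp_neg]; ring_nf
end

section
/- (Exponential high order barrier functions; quantitative form of Remark 3.) Let m ≥ 1, t0 ∈ ℝ, and let k_1, …, k_m be positive real constants. Let φ_0, φ_1, …, φ_m : ℝ → ℝ be functions such that φ_0, …, φ_{m-1} are differentiable on [t0, ∞) and φ_{i+1}(t) = φ_i'(t) + k_{i+1}·φ_i(t) for all t ≥ t0 and all i ∈ {0, …, m−1}. If φ_m(t) ≥ 0 for all t ≥ t0 and φ_i(t0) ≥ 0 for every i ∈ {0, …, m−1}, then for every i ∈ {0, …, m−1} and every t ≥ t0, φ_i(t) ≥ φ_i(t0)·exp(−k_{i+1}·(t − t0)); in particular φ_i(t) ≥ 0 for all t ≥ t0 and all i ∈ {0, …, m−1}. -/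
open Set Real

lemma gronwall_aux (t0 k : ℝ) (f g : ℝ → ℝ)
    (hf : DifferentiableOn ℝ f (Set.Ici t0))
    (hrec : ∀ t, t0 ≤ t → g t = derivWithin f (Set.Ici t0) t + k * f t)
    (hg : ∀ t, t0 ≤ t → 0 ≤ g t) :
    ∀ t, t0 ≤ t → f t0 * Real.exp (-k * (t - t0)) ≤ f t := by
  set F : ℝ → ℝ := fun t => f t * Real.exp (k * (t - t0)) with hF
  have hexp : ∀ x : ℝ, HasDerivAt (fun t => Real.exp (k * (t - t0)))
      (Real.exp (k * (x - t0)) * k) x := by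
    intro x
    have h1 : HasDerivAt (fun t : ℝ => k * (t - t0)) k x := by
      simpa using ((hasDerivAt_id x).sub_const t0).const_mul k
    simpa using h1.exp
  have hmono : MonotoneOn F (Set.Ici t0) := by
    apply monotoneOn_of_hasDerivWithinAt_nonneg (convex_Ici t0)
      (f' := fun t => g t * Real.exp (k * (t - t0)))
    · exact hf.continuousOn.mul (Continuous.continuousOn (by continuity))
    · intro x hx
      rw [interior_Ici] at hx ⊢
      have h1 : HasDerivWithinAt f (derivWithin f (Set.Ici t0) x) (Set.Ioi t0) x :=
        ((hf x (mem_Ici.mpr (le_of_lt hx))).hasDerivWithinAt).mono Ioi_subset_Ici_self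
      have h2 := h1.mul ((hexp x).hasDerivWithinAt (s := Set.Ioi t0))
      have heq : g x * Real.exp (k * (x - t0)) =
          derivWithin f (Set.Ici t0) x * Real.exp (k * (x - t0)) +
          f x * (Real.exp (k * (x - t0)) * k) := by
        rw [hrec x (le_of_lt hx)]; ring
      rw [heq]; exact h2
    · intro x hx
      rw [interior_Ici] at hx
      exact mul_nonneg (hg x (le_of_lt hx)) (Real.exp_pos _).le
  intro t ht
  have h := hmono (self_mem_Ici) (mem_Ici.mpr ht) ht
  simp only [hF, sub_self, mul_zero, Real.exp_zero, mul_one] at h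
  have h2 := mul_le_mul_of_nonneg_right h (Real.exp_pos (-k * (t - t0))).le
  rw [mul_assoc, ← Real.exp_add] at h2
  simpa [show k * (t - t0) + -k * (t - t0) = 0 by ring] using h2

/-- Quantitative form of Remark 3 (exponential high order barrier functions):
with linear class K functions `α_{i+1}(s) = k_{i+1}·s` (`k_{i+1} > 0`), the
recursion `φ_{i+1} = φ_i' + k_{i+1}·φ_i` on `[t0, ∞)`, together with
`φ_m ≥ 0` on `[t0, ∞)` and `φ_i(t0) ≥ 0` for `i < m`, yields the exponential
lower bounds `φ_i(t) ≥ φ_i(t0)·exp(−k_{i+1}(t − t0))`, in particular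
`φ_i(t) ≥ 0`, for all `t ≥ t0` and `i < m`. -/
theorem exponential_hobf
    (m : ℕ) (hm : 1 ≤ m) (t0 : ℝ)
    (k : ℕ → ℝ)
    (hk : ∀ i, 1 ≤ i → i ≤ m → 0 < k i)
    (φ : ℕ → ℝ → ℝ)
    (hdiff : ∀ i < m, DifferentiableOn ℝ (φ i) (Set.Ici t0))
    (hrec : ∀ i < m, ∀ t, t0 ≤ t →
      φ (i + 1) t = derivWithin (φ i) (Set.Ici t0) t + k (i + 1) * φ i t)
    (htop : ∀ t, t0 ≤ t → φ m t ≥ 0)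
    (hinit : ∀ i < m, φ i t0 ≥ 0) :
    ∀ i < m, ∀ t, t0 ≤ t →
      φ i t ≥ φ i t0 * Real.exp (-(k (i + 1)) * (t - t0)) ∧ φ i t ≥ 0 := by
  have key : ∀ d i, i + d = m → ∀ t, t0 ≤ t → 0 ≤ φ i t := by
    intro d
    induction d with
    | zero => intro i hi t ht; rw [Nat.add_zero] at hi; subst hi; exact htop t ht
    | succ n ih =>
      intro i hi t ht
      have him : i < m := by omega
      have hbound := gronwall_aux t0 (k (i+1)) (φ i) (φ (i+1))
        (hdiff i him) (hrec i him) (fun s hs => ih (i+1) (by omega) s hs) t ht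
      exact le_trans (mul_nonneg (hinit i him) (Real.exp_pos _).le) hbound
  intro i hi t ht
  refine ⟨gronwall_aux t0 (k (i+1)) (φ i) (φ (i+1)) (hdiff i hi) (hrec i hi)
    (fun s hs => key (m - (i+1)) (i+1) (by omega) s hs) t ht, key (m - i) i (by omega) t ht⟩
end

section
/- (Simplified adaptive cruise control safety via a second-order HOCBF with quadratic class K functions.) Let δ > 0, v0 ∈ ℝ, t0 ∈ ℝ. Let x_p, x, v : ℝ → ℝ and u : ℝ → ℝ be such that u is continuous, x_p'(t) = v0, x'(t) = v(t), and v'(t) = u(t) for all t ≥ t0. Define b(t) := x_p(t) − x(t) − δ (so b'(t) = v0 − v(t) and b''(t) = −u(t)). Assume that for all t ≥ t0 the control satisfies −u(t) + 2·b(t)·b'(t) + (b'(t))² + 2·(b(t))²·b'(t) + (b(t))⁴ ≥ 0, and that the initial conditions b(t0) ≥ 0 and b'(t0) + (b(t0))² ≥ 0 hold. Then x_p(t) − x(t) ≥ δ for all t ≥ t0. -/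
open Set Filter Topology

/-- Grönwall-type step: if `f < 0` on `[a,b]` and `f' ≥ -f²` there, then
`(f b)⁻¹ ≤ (f a)⁻¹ + (b - a)`. -/
lemma inv_step (a b : ℝ) (hab : a ≤ b) (f f' : ℝ → ℝ)
    (hf : ∀ t ∈ Set.Icc a b, HasDerivAt f (f' t) t)
    (hneg : ∀ t ∈ Set.Icc a b, f t < 0)
    (hq : ∀ t ∈ Set.Icc a b, 0 ≤ f' t + f t ^ 2) :
    (f b)⁻¹ ≤ (f a)⁻¹ + (b - a) := by
  set h : ℝ → ℝ := fun t => t - (f t)⁻¹ with hh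
  have hd : ∀ t ∈ Set.Icc a b, HasDerivAt h (1 - (-f' t / f t ^ 2)) t := by
    intro t ht
    exact (hasDerivAt_id t).sub ((hf t ht).inv (ne_of_lt (hneg t ht)))
  have hcont : ContinuousOn h (Set.Icc a b) := fun t ht =>
    ((hd t ht).continuousAt).continuousWithinAt
  have hmono : MonotoneOn h (Set.Icc a b) := by
    apply monotoneOn_of_deriv_nonneg (convex_Icc a b) hcont
    · intro t ht
      rw [interior_Icc] at ht
      exact ((hd t (Set.mem_Icc_of_Ioo ht)).differentiableAt).differentiableWithinAt
    · intro t ht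
      rw [interior_Icc] at ht
      have ht' := Set.mem_Icc_of_Ioo ht
      rw [(hd t ht').deriv]
      have h2 : 0 < f t ^ 2 := by nlinarith [hneg t ht']
      have h3 : -f' t / f t ^ 2 ≤ 1 := (div_le_one h2).mpr (by nlinarith [hq t ht'])
      linarith
  have := hmono (Set.left_mem_Icc.mpr hab) (Set.right_mem_Icc.mpr hab) hab
  simp only [hh] at this
  linarith


/-- Comparison lemma: if `f' ≥ -f²` on `[t0,∞)` and `f t0 ≥ 0`, then `f ≥ 0` on `[t0,∞)`. -/
lemma nonneg_of_deriv_ge_neg_sq (t0 : ℝ) (f f' : ℝ → ℝ)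
    (hf : ∀ t, t0 ≤ t → HasDerivAt f (f' t) t)
    (hq : ∀ t, t0 ≤ t → 0 ≤ f' t + f t ^ 2)
    (h0 : 0 ≤ f t0) : ∀ t, t0 ≤ t → 0 ≤ f t := by
  by_contra hcon
  push_neg at hcon
  obtain ⟨t1, ht01, ht1⟩ := hcon
  set S : Set ℝ := {t | t ∈ Set.Icc t0 t1 ∧ 0 ≤ f t} with hS
  have hne : S.Nonempty := ⟨t0, ⟨Set.left_mem_Icc.mpr ht01, h0⟩⟩
  have hbdd : BddAbove S := ⟨t1, fun t ht => ht.1.2⟩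
  set s := sSup S with hs
  have hts : t0 ≤ s := le_csSup hbdd ⟨Set.left_mem_Icc.mpr ht01, h0⟩
  have hst1 : s ≤ t1 := csSup_le hne fun t ht => ht.1.2
  -- f s ≥ 0 by continuity and closure
  have hfs : 0 ≤ f s := by
    have hcl : s ∈ closure S := csSup_mem_closure hne hbdd
    have hnb : (nhdsWithin s S).NeBot := mem_closure_iff_nhdsWithin_neBot.mp hcl
    have htd : Filter.Tendsto f (nhdsWithin s S) (nhds (f s)) :=
      ((hf s hts).continuousAt).continuousWithinAt
    exact ge_of_tendsto htd (eventually_nhdsWithin_of_forall fun t ht => ht.2)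
  -- f < 0 on (s, t1]
  have hflt : ∀ t ∈ Set.Ioc s t1, f t < 0 := by
    intro t ht
    by_contra hge
    push_neg at hge
    have : t ∈ S := ⟨⟨le_trans hts (le_of_lt ht.1), ht.2⟩, hge⟩
    exact absurd (le_csSup hbdd this) (not_le.mpr ht.1)
  have hslt : s < t1 := by
    rcases lt_or_eq_of_le hst1 with h | h
    · exact h
    · exfalso; rw [h] at hfs; linarith
  -- the uniform bound
  set K : ℝ := (t1 - t0) - (f t1)⁻¹ with hK
  have hft1 : f t1 < 0 := ht1
  have hift1 : (f t1)⁻¹ < 0 := inv_lt_zero.mpr hft1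
  have hKpos : 0 < K := by
    have : t0 ≤ t1 := ht01
    simp only [hK]; linarith
  have hbound : ∀ s' ∈ Set.Ioo s t1, f s' ≤ -K⁻¹ := by
    intro s' hs'
    have hs't0 : t0 ≤ s' := le_trans hts (le_of_lt hs'.1)
    have hs't1 : s' ≤ t1 := le_of_lt hs'.2
    have hnegI : ∀ t ∈ Set.Icc s' t1, f t < 0 := fun t ht =>
      hflt t ⟨lt_of_lt_of_le hs'.1 ht.1, ht.2⟩
    have hstep := inv_step s' t1 hs't1 f f'
      (fun t ht => hf t (le_trans hs't0 ht.1))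
      hnegI
      (fun t ht => hq t (le_trans hs't0 ht.1))
    -- (f t1)⁻¹ ≤ (f s')⁻¹ + (t1 - s')
    have hinv : -K ≤ (f s')⁻¹ := by
      simp only [hK]; linarith
    have hfs' : f s' < 0 := hnegI s' ⟨le_refl _, hs't1⟩
    nlinarith [mul_inv_cancel₀ (ne_of_lt hfs'), mul_inv_cancel₀ (ne_of_gt hKpos)]
  -- limit from the right at s contradicts f s ≥ 0
  have htd : Filter.Tendsto f (nhdsWithin s (Set.Ioi s)) (nhds (f s)) :=
    ((hf s hts).continuousAt).continuousWithinAt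
  have hev : ∀ᶠ t in nhdsWithin s (Set.Ioi s), f t ≤ -K⁻¹ := by
    filter_upwards [Ioo_mem_nhdsGT_of_mem (Set.left_mem_Ico.mpr hslt)] with t ht
    exact hbound t ht
  have : f s ≤ -K⁻¹ := le_of_tendsto htd hev
  have : 0 < K⁻¹ := inv_pos.mpr hKpos
  linarith


/-- Simplified adaptive cruise control safety via a second-order HOCBF with
quadratic class K functions: with `b(t) = x_p(t) − x(t) − δ`, `b'(t) = v0 − v(t)`
and `b''(t) = −u(t)`, if the control satisfies
`−u + 2bb' + b'² + 2b²b' + b⁴ ≥ 0` for all `t ≥ t0` and the initial conditions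
`b(t0) ≥ 0` and `b'(t0) + b(t0)² ≥ 0` hold, then `x_p(t) − x(t) ≥ δ` for all
`t ≥ t0`. -/
theorem sacc_safety
    (δ v0 t0 : ℝ) (hδ : 0 < δ)
    (xp x v u : ℝ → ℝ)
    (hu : Continuous u)
    (hxp : ∀ t, t0 ≤ t → HasDerivAt xp v0 t)
    (hx : ∀ t, t0 ≤ t → HasDerivAt x (v t) t)
    (hv : ∀ t, t0 ≤ t → HasDerivAt v (u t) t)
    (hconstraint : ∀ t, t0 ≤ t →
      -u t + 2 * (xp t - x t - δ) * (v0 - v t) + (v0 - v t) ^ 2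
        + 2 * (xp t - x t - δ) ^ 2 * (v0 - v t) + (xp t - x t - δ) ^ 4 ≥ 0)
    (hinit0 : xp t0 - x t0 - δ ≥ 0)
    (hinit1 : (v0 - v t0) + (xp t0 - x t0 - δ) ^ 2 ≥ 0) :
    ∀ t, t0 ≤ t → xp t - x t ≥ δ := by
  set b : ℝ → ℝ := fun t => xp t - x t - δ with hb
  have hdb : ∀ t, t0 ≤ t → HasDerivAt b (v0 - v t) t := fun t ht =>
    ((hxp t ht).sub (hx t ht)).sub_const δ
  -- ψ₁ = b' + b²
  set ψ : ℝ → ℝ := fun t => (v0 - v t) + (b t) ^ 2 with hψ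
  have hdψ : ∀ t, t0 ≤ t →
      HasDerivAt ψ ((0 - u t) + 2 * b t ^ 1 * (v0 - v t)) t := fun t ht =>
    ((hasDerivAt_const t v0).sub (hv t ht)).add ((hdb t ht).pow 2)
  have hψnn : ∀ t, t0 ≤ t → 0 ≤ ψ t := by
    apply nonneg_of_deriv_ge_neg_sq t0 ψ
      (fun t => (0 - u t) + 2 * b t ^ 1 * (v0 - v t)) hdψ
    · intro t ht
      have h := hconstraint t ht
      simp only [hψ, hb]
      ring_nf
      ring_nf at h
      nlinarith [h]
    · exact hinit1
  -- now b' ≥ -b²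
  have hbnn : ∀ t, t0 ≤ t → 0 ≤ b t := by
    apply nonneg_of_deriv_ge_neg_sq t0 b (fun t => v0 - v t) hdb
    · intro t ht
      exact hψnn t ht
    · exact hinit0
  intro t ht
  have := hbnn t ht
  simp only [hb] at this
  linarith
end
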